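/- In the rooted capacity model, for every integer i ≥ 0: 2 · #{u ∈ V : L(u) ≤ i and d(u) < d̄_u} ≥ 1 + Z_i − X_{i+1}. -/

import Mathlib

namespace P2P

/-- A walk of length `n` from `r` to `u` in the edge set `E`. -/
def Walk {α : Type*} (E : Finset (α × α)) (r u : α) (n : ℕ) : Prop :=
  ∃ f : ℕ → α, f 0 = r ∧ f n = u ∧ ∀ k < n, (f k, f (k + 1)) ∈ E

/-- Depth of `u` below root `r`: minimal number of edges of a directed walk
(equivalently, of a directed path) from `r` to `u`; `⊤` if unreachable. -/
noncomputable def depth {α : Type*} (E : Finset (α × α)) (r u : α) : ℕ∞ :=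
  sInf {n : ℕ∞ | ∃ m : ℕ, n = (m : ℕ∞) ∧ Walk E r u m}

/-- Out-degree of `u` in `E`. -/
def outDeg {α : Type*} [DecidableEq α] (E : Finset (α × α)) (u : α) : ℕ :=
  (E.filter fun e => e.1 = u).card

/-- In-degree of `u` in `E`. -/
def inDeg {α : Type*} [DecidableEq α] (E : Finset (α × α)) (u : α) : ℕ :=
  (E.filter fun e => e.2 = u).card

/-!
Let `A = {L ≤ i}`, `B = {L = i + 1}` and let `S ⊆ A` be the nodes below their cap. Every edge
leaving `A` ends in `(A ∪ B) \ {r}`, and distinct edges have distinct heads because in-degrees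
are at most one, so `∑_{u ∈ A} d(u) ≤ |A| + |B| - 1`. Each node of `A \ S` contributes at least
`d̄_u ≥ 2` to that sum, whence `2 (|A| - |S|) ≤ |A| + |B| - 1`.
-/

open Finset

section Depth

variable {α : Type*} {E : Finset (α × α)} {r u v : α}

lemma depth_self (E : Finset (α × α)) (r : α) : depth E r r = 0 :=
  nonpos_iff_eq_zero.mp <| sInf_le ⟨0, rfl, fun _ => r, rfl, rfl, by simp⟩

lemma Walk.depth_le {n : ℕ} (h : Walk E r u n) : depth E r u ≤ n :=
  sInf_le ⟨n, rfl, h⟩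

lemma Walk.snoc {n : ℕ} (h : Walk E r u n) (he : (u, v) ∈ E) : Walk E r v (n + 1) := by
  obtain ⟨f, hf0, hfn, hstep⟩ := h
  refine ⟨Function.update f (n + 1) v, by simp [hf0], by simp, fun k hk => ?_⟩
  rcases Nat.lt_succ_iff_lt_or_eq.mp hk with hk | rfl
  · simpa [Function.update_of_ne (show k ≠ n + 1 by omega),
      Function.update_of_ne (show k + 1 ≠ n + 1 by omega)] using hstep k hk
  · simpa [hfn] using he

lemma exists_walk_of_depth_le {n : ℕ} (h : depth E r u ≤ n) : ∃ k ≤ n, Walk E r u k := by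
  obtain ⟨_, ⟨k, rfl, hk⟩, hlt⟩ :=
    sInf_lt_iff.mp (h.trans_lt (ENat.natCast_lt_natCast.mpr n.lt_succ_self))
  exact ⟨k, Nat.lt_succ_iff.mp (ENat.natCast_lt_natCast.mp hlt), hk⟩

lemma depth_le_succ_of_mem {n : ℕ} (he : (u, v) ∈ E) (h : depth E r u ≤ n) :
    depth E r v ≤ (n + 1 : ℕ) := by
  obtain ⟨k, hk, hw⟩ := exists_walk_of_depth_le h
  exact (hw.snoc he).depth_le.trans (by exact_mod_cast Nat.succ_le_succ hk)

lemma depth_le_or_eq_succ_of_mem {n : ℕ} (he : (u, v) ∈ E) (h : depth E r u ≤ n) :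
    depth E r v ≤ n ∨ depth E r v = (n + 1 : ℕ) := by
  have hv := depth_le_succ_of_mem he h
  generalize depth E r v = d at hv ⊢
  induction d using ENat.recTopCoe with
  | top => simp at hv
  | coe m => norm_cast at hv ⊢; omega

end Depth

section Degree

variable {α : Type*} [DecidableEq α] {E : Finset (α × α)}

lemma sum_outDeg_eq_card_filter (A : Finset α) :
    ∑ u ∈ A, outDeg E u = #{e ∈ E | e.1 ∈ A} := by
  rw [card_eq_sum_card_fiberwise (s := {e ∈ E | e.1 ∈ A}) (f := Prod.fst) (t := A)
    fun e he => (mem_filter.mp (mem_coe.mp he)).2]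
  refine sum_congr rfl fun u hu => ?_
  rw [filter_filter, outDeg]
  exact congrArg card (filter_congr fun e _ => ⟨fun h => ⟨h ▸ hu, h⟩, And.right⟩)

lemma injOn_snd_of_inDeg_le_one (hone : ∀ w, inDeg E w ≤ 1) :
    Set.InjOn Prod.snd (E : Set (α × α)) :=
  fun e he e' he' hsnd => card_le_one.mp (hone e.2) e (mem_filter.mpr ⟨he, rfl⟩) e'
    (mem_filter.mpr ⟨he', hsnd.symm⟩)

lemma snd_ne_of_inDeg_eq_zero {r : α} (hr : inDeg E r = 0) {e : α × α} (he : e ∈ E) : e.2 ≠ r :=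
  fun h => (card_pos.mpr ⟨e, mem_filter.mpr ⟨he, h⟩⟩).ne' hr

lemma sum_outDeg_le_card (hone : ∀ w, inDeg E w ≤ 1) {A T : Finset α}
    (hT : ∀ e ∈ E, e.1 ∈ A → e.2 ∈ T) : ∑ u ∈ A, outDeg E u ≤ #T := by
  rw [sum_outDeg_eq_card_filter]
  refine card_le_card_of_injOn Prod.snd (fun e he => ?_)
    ((injOn_snd_of_inDeg_le_one hone).mono (coe_subset.mpr (filter_subset _ _)))
  obtain ⟨he, heA⟩ := mem_filter.mp he
  exact hT e he heA

end Degree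

theorem available_nodes_lower_bound'_general
    {α : Type*} [Fintype α] [DecidableEq α]
    (r : α) (E : Finset (α × α))
    (hone : ∀ w : α, inDeg E w ≤ 1)
    (hrootin : inDeg E r = 0)
    (dbar : α → ℕ) (hdbar : ∀ u : α, 2 ≤ dbar u)
    (i : ℕ) :
    (1 : ℤ) + (Nat.card {u : α // depth E r u ≤ (i : ℕ∞)} : ℤ) -
        (Nat.card {u : α // depth E r u = ((i + 1 : ℕ) : ℕ∞)} : ℤ) ≤
      2 * (Nat.card {u : α // depth E r u ≤ (i : ℕ∞) ∧ outDeg E u < dbar u} : ℤ) := by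
  classical
  simp only [Nat.card_eq_fintype_card, Fintype.card_subtype]
  set A : Finset α := {u | depth E r u ≤ i}
  set B : Finset α := {u | depth E r u = (i + 1 : ℕ)}
  have hrA : r ∈ A := by simp [A, depth_self]
  have hAB : Disjoint A B := disjoint_filter.mpr fun u _ hA hB => by
    rw [hB] at hA; exact absurd (ENat.natCast_le_natCast.mp hA) (by omega)
  have hsat : 2 * #{u ∈ A | ¬outDeg E u < dbar u} ≤ ∑ u ∈ A, outDeg E u := calc
    2 * #{u ∈ A | ¬outDeg E u < dbar u} = #{u ∈ A | ¬outDeg E u < dbar u} • 2 := by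
      rw [smul_eq_mul, mul_comm]
    _ ≤ ∑ u ∈ A with ¬outDeg E u < dbar u, outDeg E u :=
      card_nsmul_le_sum _ _ 2 fun u hu => (hdbar u).trans (not_lt.mp (mem_filter.mp hu).2)
    _ ≤ ∑ u ∈ A, outDeg E u := sum_le_sum_of_subset (filter_subset _ _)
  have hheads : ∑ u ∈ A, outDeg E u ≤ #((A ∪ B).erase r) :=
    sum_outDeg_le_card hone fun e he heA => mem_erase.mpr ⟨snd_ne_of_inDeg_eq_zero hrootin he, by
      simpa [A, B] using depth_le_or_eq_succ_of_mem (r := r) he (mem_filter.mp heA).2⟩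
  rw [card_erase_of_mem (mem_union_left B hrA), card_union_of_disjoint hAB] at hheads
  have hsplit := card_filter_add_card_filter_not (s := A) (fun u => outDeg E u < dbar u)
  rw [filter_filter] at hsplit
  have := card_pos.mpr ⟨r, hrA⟩
  omega

/-- in the rooted capacity model (at most one incoming edge per
node, none at the root, degree caps `d̄_u ≥ 2`), for every `i ≥ 0`,
`2·#{u : L(u) ≤ i, d(u) < d̄_u} ≥ 1 + Z_i − X_{i+1}`. -/
theorem available_nodes_lower_bound'
    {α : Type*} [Fintype α] [DecidableEq α]
    (r : α) (E : Finset (α × α))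
    (hdist : ∀ e ∈ E, e.1 ≠ e.2)
    (hone : ∀ w : α, inDeg E w ≤ 1)
    (hrootin : inDeg E r = 0)
    (dbar : α → ℕ) (hdbar : ∀ u : α, 2 ≤ dbar u)
    (i : ℕ) :
    (1 : ℤ) + (Nat.card {u : α // depth E r u ≤ (i : ℕ∞)} : ℤ) -
        (Nat.card {u : α // depth E r u = ((i + 1 : ℕ) : ℕ∞)} : ℤ) ≤
      2 * (Nat.card {u : α // depth E r u ≤ (i : ℕ∞) ∧ outDeg E u < dbar u} : ℤ) :=
  available_nodes_lower_bound'_general r E hone hrootin dbar hdbar i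

end P2P
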